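/- Assume (V1)–(V3). Let c_ε > 0 be the mountain-pass level of I_ε along paths from 0 to ψ_ε, so that c_ε ≤ δ·((N−μ)/(2N−μ))·2^{N/(N−μ)}·ε^{2(1−2τ)(2N−μ)/(N−μ)}; consequently c_ε = o(ε²) as ε → 0. Let {u_n} be a (PS)_{c_ε} sequence for I_ε with weak limit u (a critical point with I_ε(u) ≥ 0) and set w_n := u_n − u. Then for any η > 0 there exists ℰ_η > 0 such that for every 0 < ε ≤ ℰ_η one has ∫_{ℝ^N}|w_n|² dx ≤ η for all n large enough. -/

import Mathlib

open MeasureTheory Filter Topology Set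
open scoped RealInnerProductSpace

noncomputable section

/-- `ℝ^N` -/
abbrev RN (N : ℕ) : Type := EuclideanSpace ℝ (Fin N)

/-- upper critical exponent `2_μ^* = (2N−μ)/(N−2)` -/
def pU (N : ℕ) (μ : ℝ) : ℝ := (2 * (N:ℝ) - μ) / ((N:ℝ) - 2)

/-- lower critical exponent `2_{μ*} = (2N−μ)/N` -/
def pL (N : ℕ) (μ : ℝ) : ℝ := (2 * (N:ℝ) - μ) / (N:ℝ)

/-- `∫ ‖∇u‖²` -/
def gradSq (N : ℕ) (u : RN N → ℝ) : ℝ := ∫ x : RN N, ‖gradient u x‖ ^ 2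

/-- the nonlocal double integral `∫∫ |u x|^p |u y|^p |x−y|^{−μ} dx dy` -/
def DD (N : ℕ) (μ p : ℝ) (u : RN N → ℝ) : ℝ :=
  ∫ x : RN N, ∫ y : RN N, |u x| ^ p * |u y| ^ p / ‖x - y‖ ^ μ

/-- `∫ (|x|^{−μ} ∗ |u|^p)(x) |u(x)|^{p−2} u(x) v(x) dx`, the nonlinear term of `⟨I'(u), v⟩` -/
def convTerm (N : ℕ) (μ p : ℝ) (u v : RN N → ℝ) : ℝ :=
  ∫ x : RN N, (∫ y : RN N, |u y| ^ p / ‖x - y‖ ^ μ) * |u x| ^ (p - 2) * u x * v x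

/-- membership in `H¹(ℝ^N)` -/
def MemH1 (N : ℕ) (u : RN N → ℝ) : Prop :=
  MemLp u 2 volume ∧ Differentiable ℝ u ∧ MemLp (gradient u) 2 volume

/-- membership in `E = {u ∈ H¹ : ∫ V u² < ∞}` -/
def MemE (N : ℕ) (V : RN N → ℝ) (u : RN N → ℝ) : Prop :=
  MemH1 N u ∧ Integrable (fun x => V x * u x ^ 2) volume

/-- `‖u‖_ε² = ∫ (ε²|∇u|² + V u²)` -/
def normEsq (N : ℕ) (ε : ℝ) (V : RN N → ℝ) (u : RN N → ℝ) : ℝ :=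
  ∫ x : RN N, (ε ^ 2 * ‖gradient u x‖ ^ 2 + V x * u x ^ 2)

/-- `‖u‖_{H¹}²` -/
def normH1sq (N : ℕ) (u : RN N → ℝ) : ℝ :=
  ∫ x : RN N, (‖gradient u x‖ ^ 2 + u x ^ 2)

/-- the energy functional `I_ε` for the doubly critical Choquard equation -/
def Ifun (N : ℕ) (μ ε : ℝ) (V : RN N → ℝ) (u : RN N → ℝ) : ℝ :=
  (1/2) * normEsq N ε V u - (1 / (2 * pU N μ)) * DD N μ (pU N μ) u -
    (1 / (2 * pL N μ)) * DD N μ (pL N μ) u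

/-- the Fréchet derivative pairing `⟨I_ε'(u), v⟩` -/
def Ider (N : ℕ) (μ ε : ℝ) (V : RN N → ℝ) (u v : RN N → ℝ) : ℝ :=
  (∫ x : RN N, (ε ^ 2 * ⟪gradient u x, gradient v x⟫ + V x * u x * v x)) -
    convTerm N μ (pU N μ) u v - convTerm N μ (pL N μ) u v

/-- `u` is a (weak) solution of the doubly critical equation
`−ε²Δu + Vu = (|x|^{−μ}∗|u|^{2_μ^*})|u|^{2_μ^*−2}u + (|x|^{−μ}∗|u|^{2_{μ*}})|u|^{2_{μ*}−2}u`,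
i.e. a critical point of `I_ε` on `E` -/
def IsSolE (N : ℕ) (μ ε : ℝ) (V : RN N → ℝ) (u : RN N → ℝ) : Prop :=
  MemE N V u ∧ ∀ v, MemE N V v → Ider N μ ε V u v = 0

/-- `(PS)_c` sequence for `I_ε` on `E` -/
def PSseqE (N : ℕ) (μ ε : ℝ) (V : RN N → ℝ) (c : ℝ) (u : ℕ → RN N → ℝ) : Prop :=
  (∀ n, MemE N V (u n)) ∧
  Tendsto (fun n => Ifun N μ ε V (u n)) atTop (nhds c) ∧
  ∃ lam : ℕ → ℝ, Tendsto lam atTop (nhds 0) ∧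
    ∀ n v, MemE N V v → |Ider N μ ε V (u n) v| ≤ lam n * Real.sqrt (normEsq N ε V v)

/-- condition (V₁) -/
def CondV1 (N : ℕ) (V : RN N → ℝ) : Prop :=
  Continuous V ∧ ∃ b : ℝ, 0 < b ∧ volume {x : RN N | V x < b} < ⊤

/-- condition (V₂) -/
def CondV2 (N : ℕ) (V : RN N → ℝ) : Prop :=
  V 0 = 0 ∧ ∀ x, 0 ≤ V x

/-- condition (V₃) with parameter `τ` -/
def CondV3 (N : ℕ) (μ : ℝ) (V : RN N → ℝ) (τ : ℝ) : Prop :=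
  0 < τ ∧ τ ≤ 1 / ((N:ℝ) - μ + 2) ∧
    Tendsto (fun x : RN N => V x / ‖x‖ ^ ((1 - 2 * τ) / τ))
      (nhdsWithin 0 {(0 : RN N)}ᶜ) (nhds 0)

/-- weak convergence `u_n ⇀ w` in `E` -/
def WeakConvE (N : ℕ) (ε : ℝ) (V : RN N → ℝ) (u : ℕ → RN N → ℝ) (w : RN N → ℝ) : Prop :=
  ∀ v, MemE N V v →
    Tendsto (fun n => ∫ x : RN N,
        (ε ^ 2 * ⟪gradient (u n) x, gradient v x⟫ + V x * u n x * v x)) atTop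
      (nhds (∫ x : RN N, (ε ^ 2 * ⟪gradient w x, gradient v x⟫ + V x * w x * v x)))



open scoped ENNReal
-- basic exponent facts
lemma cast_facts {N : ℕ} (hN : 3 ≤ N) : (3:ℝ) ≤ (N:ℝ) := by exact_mod_cast hN

lemma pL_pos {N : ℕ} {μ : ℝ} (hN : 3 ≤ N) (hμN : μ < (N:ℝ)) : 0 < pL N μ := by
  have h3 : (3:ℝ) ≤ (N:ℝ) := by exact_mod_cast hN
  have : 0 < 2*(N:ℝ) - μ := by nlinarith
  exact div_pos this (by linarith)

lemma pU_pos {N : ℕ} {μ : ℝ} (hN : 3 ≤ N) (hμN : μ < (N:ℝ)) : 0 < pU N μ := by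
  have h3 : (3:ℝ) ≤ (N:ℝ) := by exact_mod_cast hN
  have : 0 < 2*(N:ℝ) - μ := by nlinarith
  exact div_pos this (by linarith)

lemma pL_gt_one {N : ℕ} {μ : ℝ} (hN : 3 ≤ N) (hμ0 : 0 < μ) (hμN : μ < (N:ℝ)) :
    1 < pL N μ := by
  have h3 : (3:ℝ) ≤ (N:ℝ) := by exact_mod_cast hN
  rw [pL, lt_div_iff₀ (by linarith)]
  linarith

lemma pL_le_pU {N : ℕ} {μ : ℝ} (hN : 3 ≤ N) (hμN : μ < (N:ℝ)) : pL N μ ≤ pU N μ := by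
  have h3 : (3:ℝ) ≤ (N:ℝ) := by exact_mod_cast hN
  have hnum : 0 < 2*(N:ℝ) - μ := by nlinarith
  apply div_le_div_of_nonneg_left hnum.le (by linarith) (by linarith)

-- |a|^(p-2) * a * a = |a|^p
lemma rpow_helper (a : ℝ) {p : ℝ} (hp : 0 < p) :
    |a| ^ (p - 2) * a * a = |a| ^ p := by
  rcases eq_or_ne a 0 with h | h
  · simp [h, Real.zero_rpow hp.ne']
  · have habs : 0 < |a| := abs_pos.2 h
    have h2 : a * a = |a| * |a| := (abs_mul_abs_self a).symm
    calc |a| ^ (p - 2) * a * a = |a| ^ (p - 2) * (|a| * |a|) := by rw [mul_assoc, h2]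
    _ = |a| ^ (p - 2) * |a| ^ ((2:ℕ):ℝ) := by
        rw [Real.rpow_natCast]; ring
    _ = |a| ^ (p - 2 + 2) := by rw [← Real.rpow_add habs]; norm_num
    _ = |a| ^ p := by norm_num

lemma convTerm_self_eq_DD {N : ℕ} {μ p : ℝ} (hp : 0 < p) (u : RN N → ℝ) :
    convTerm N μ p u u = DD N μ p u := by
  unfold convTerm DD
  have : ∀ x : RN N,
      (∫ y : RN N, |u y| ^ p / ‖x - y‖ ^ μ) * |u x| ^ (p - 2) * u x * u x
        = ∫ y : RN N, |u x| ^ p * |u y| ^ p / ‖x - y‖ ^ μ := by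
    intro x
    have h1 : (∫ y : RN N, |u x| ^ p * |u y| ^ p / ‖x - y‖ ^ μ)
        = |u x| ^ p * ∫ y : RN N, |u y| ^ p / ‖x - y‖ ^ μ := by
      simp_rw [mul_div_assoc]
      exact integral_const_mul _ _
    rw [h1, mul_assoc, mul_assoc, ← mul_assoc (|u x| ^ (p-2)), rpow_helper (u x) hp,
      mul_comm]
  refine integral_congr_ae (Filter.Eventually.of_forall ?_)
  exact this

lemma DD_nonneg {N : ℕ} {μ p : ℝ} (u : RN N → ℝ) : 0 ≤ DD N μ p u := by
  apply integral_nonneg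
  intro x
  apply integral_nonneg
  intro y
  positivity


lemma integrable_gradsq {N : ℕ} {u : RN N → ℝ} (hu : MemLp (gradient u) 2 (volume : Measure (RN N))) :
    Integrable (fun x => ‖gradient u x‖ ^ 2) (volume : Measure (RN N)) :=
  (memLp_two_iff_integrable_sq_norm hu.aestronglyMeasurable).mp hu

lemma normEsq_split {N : ℕ} (ε : ℝ) (V : RN N → ℝ) {u : RN N → ℝ}
    (hu : MemE N V u) :
    normEsq N ε V u = ε ^ 2 * (∫ x : RN N, ‖gradient u x‖ ^ 2)
      + ∫ x : RN N, V x * u x ^ 2 := by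
  unfold normEsq
  rw [← integral_const_mul]
  exact integral_add ((integrable_gradsq hu.1.2.2).const_mul _) hu.2

lemma normEsq_nonneg {N : ℕ} (ε : ℝ) {V : RN N → ℝ} (hV : ∀ x, 0 ≤ V x) (u : RN N → ℝ) :
    0 ≤ normEsq N ε V u := by
  apply integral_nonneg
  intro x
  have := hV x
  positivity

lemma Vpart_le_normEsq {N : ℕ} (ε : ℝ) {V : RN N → ℝ} {u : RN N → ℝ}
    (hu : MemE N V u) :
    (∫ x : RN N, V x * u x ^ 2) ≤ normEsq N ε V u := by
  rw [normEsq_split ε V hu]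
  nlinarith [integral_nonneg (μ := (volume : Measure (RN N)))
    (f := fun x => ‖gradient u x‖ ^ 2) (fun x => by positivity), sq_nonneg ε]

lemma gradpart_le_normEsq {N : ℕ} (ε : ℝ) {V : RN N → ℝ} (hV : ∀ x, 0 ≤ V x) {u : RN N → ℝ}
    (hu : MemE N V u) :
    ε ^ 2 * (∫ x : RN N, ‖gradient u x‖ ^ 2) ≤ normEsq N ε V u := by
  rw [normEsq_split ε V hu]
  have : 0 ≤ ∫ x : RN N, V x * u x ^ 2 :=
    integral_nonneg (fun x => by have := hV x; positivity)
  linarith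

-- θ-trick
lemma le_sqrt_mul_sqrt {a b c : ℝ} (hb : 0 ≤ b) (hc : 0 ≤ c)
    (h : ∀ θ : ℝ, 0 < θ → a ≤ θ/2*b + 1/(2*θ)*c) : a ≤ Real.sqrt b * Real.sqrt c := by
  have key : ∀ b' c' : ℝ, 0 < b' → 0 < c' → (∀ θ : ℝ, 0 < θ → a ≤ θ/2*b' + 1/(2*θ)*c') →
      a ≤ Real.sqrt b' * Real.sqrt c' := by
    intro b' c' hb' hc' h'
    have hsb : 0 < Real.sqrt b' := Real.sqrt_pos.2 hb'
    have hsc : 0 < Real.sqrt c' := Real.sqrt_pos.2 hc'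
    have hθ := h' (Real.sqrt c' / Real.sqrt b') (div_pos hsc hsb)
    have hb2 : Real.sqrt b' * Real.sqrt b' = b' := Real.mul_self_sqrt hb'.le
    have hc2 : Real.sqrt c' * Real.sqrt c' = c' := Real.mul_self_sqrt hc'.le
    calc a ≤ (Real.sqrt c' / Real.sqrt b')/2*b' + 1/(2*(Real.sqrt c' / Real.sqrt b'))*c' := hθ
    _ = Real.sqrt b' * Real.sqrt c' := by
        field_simp
        nlinarith [hb2, hc2]
  -- limit cases
  rcases eq_or_lt_of_le hb with hb0 | hbpos
  · -- b = 0
    have ha : a ≤ 0 := by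
      by_contra h'
      push_neg at h'
      have hθ := h ((c+1)/(2*a)) (by positivity)
      rw [← hb0] at hθ
      have h1 : (1:ℝ)/(2*((c+1)/(2*a)))*c = a*c/(c+1) := by
        field_simp
      rw [h1] at hθ
      have : a * c / (c+1) < a := by
        rw [div_lt_iff₀ (by linarith)]
        nlinarith
      linarith [hθ]
    exact ha.trans (by positivity)
  rcases eq_or_lt_of_le hc with hc0 | hcpos
  · have ha : a ≤ 0 := by
      by_contra h'
      push_neg at h'
      have hθ := h ((b+1)/(2*a)) (by positivity)
      rw [← hc0] at hθ
      have hθ' := h (a/(b+1)) (by positivity)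
      rw [← hc0] at hθ'
      have h1 : a/(b+1)/2*b + 1/(2*(a/(b+1)))*0 = a*b/(2*(b+1)) := by
        field_simp
        ring
      rw [h1] at hθ'
      have : a*b/(2*(b+1)) < a := by
        rw [div_lt_iff₀ (by linarith)]
        nlinarith
      linarith
    exact ha.trans (by positivity)
  · exact key b c hbpos hcpos h


lemma Bform_integrable {N : ℕ} (ε : ℝ) {V : RN N → ℝ} (hVc : Continuous V) (hV : ∀ x, 0 ≤ V x)
    {u w : RN N → ℝ} (hu : MemE N V u) (hw : MemE N V w) :
    Integrable (fun x => ε ^ 2 * ⟪gradient u x, gradient w x⟫ + V x * u x * w x)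
      (volume : Measure (RN N)) := by
  have hgu := hu.1.2.2.aestronglyMeasurable
  have hgw := hw.1.2.2.aestronglyMeasurable
  have huc : Continuous u := hu.1.2.1.continuous
  have hwc : Continuous w := hw.1.2.1.continuous
  have h1 : Integrable (fun x => ε ^ 2 * ⟪gradient u x, gradient w x⟫)
      (volume : Measure (RN N)) := by
    have hbound : Integrable
        (fun x => ε ^ 2 * ((‖gradient u x‖ ^ 2 + ‖gradient w x‖ ^ 2)/2))
        (volume : Measure (RN N)) :=
      (((integrable_gradsq hu.1.2.2).add (integrable_gradsq hw.1.2.2)).div_const 2).const_mul _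
    refine Integrable.mono' hbound ((hgu.inner hgw).const_mul _) ?_
    refine Filter.Eventually.of_forall fun x => ?_
    have h2 : |⟪gradient u x, gradient w x⟫| ≤ ‖gradient u x‖ * ‖gradient w x‖ :=
      abs_real_inner_le_norm _ _
    rw [Real.norm_eq_abs, abs_mul, abs_of_nonneg (sq_nonneg ε)]
    have : ‖gradient u x‖ * ‖gradient w x‖ ≤ (‖gradient u x‖^2 + ‖gradient w x‖^2)/2 := by
      nlinarith [sq_nonneg (‖gradient u x‖ - ‖gradient w x‖)]
    calc ε^2 * |⟪gradient u x, gradient w x⟫| ≤ ε^2 * (‖gradient u x‖ * ‖gradient w x‖) := by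
          nlinarith [sq_nonneg ε]
    _ ≤ ε^2 * ((‖gradient u x‖^2 + ‖gradient w x‖^2)/2) := by nlinarith [sq_nonneg ε]
  have h2 : Integrable (fun x => V x * u x * w x) (volume : Measure (RN N)) := by
    have hbound : Integrable (fun x => (V x * u x ^2 + V x * w x ^2)/2)
        (volume : Measure (RN N)) := (hu.2.add hw.2).div_const 2
    refine Integrable.mono' hbound ((hVc.mul huc).mul hwc).aestronglyMeasurable ?_
    refine Filter.Eventually.of_forall fun x => ?_
    have hVx := hV x
    rw [Real.norm_eq_abs, abs_mul, abs_mul, abs_of_nonneg hVx]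
    have : |u x| * |w x| ≤ (u x^2 + w x^2)/2 := by
      nlinarith [sq_nonneg (|u x| - |w x|), sq_abs (u x), sq_abs (w x)]
    calc V x * |u x| * |w x| ≤ V x * ((u x^2 + w x^2)/2) := by nlinarith
    _ = (V x * u x ^2 + V x * w x ^2)/2 := by ring
  exact h1.add h2

lemma Bform_le_sqrt {N : ℕ} (ε : ℝ) {V : RN N → ℝ} (hVc : Continuous V) (hV : ∀ x, 0 ≤ V x)
    {u w : RN N → ℝ} (hu : MemE N V u) (hw : MemE N V w) :
    (∫ x : RN N, (ε ^ 2 * ⟪gradient u x, gradient w x⟫ + V x * u x * w x))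
      ≤ Real.sqrt (normEsq N ε V u) * Real.sqrt (normEsq N ε V w) := by
  refine le_sqrt_mul_sqrt (normEsq_nonneg ε hV u) (normEsq_nonneg ε hV w) fun θ hθ => ?_
  have hInt1 : Integrable (fun x => θ/2 * (ε ^ 2 * ‖gradient u x‖ ^ 2 + V x * u x ^ 2)
      + 1/(2*θ) * (ε ^ 2 * ‖gradient w x‖ ^ 2 + V x * w x ^ 2)) (volume : Measure (RN N)) := by
    refine Integrable.add (Integrable.const_mul ?_ _) (Integrable.const_mul ?_ _)
    · exact ((integrable_gradsq hu.1.2.2).const_mul _).add hu.2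
    · exact ((integrable_gradsq hw.1.2.2).const_mul _).add hw.2
  have hmono : ∀ x : RN N, ε ^ 2 * ⟪gradient u x, gradient w x⟫ + V x * u x * w x
      ≤ θ/2 * (ε ^ 2 * ‖gradient u x‖ ^ 2 + V x * u x ^ 2)
        + 1/(2*θ) * (ε ^ 2 * ‖gradient w x‖ ^ 2 + V x * w x ^ 2) := by
    intro x
    have h1 : ⟪gradient u x, gradient w x⟫ ≤ ‖gradient u x‖ * ‖gradient w x‖ :=
      real_inner_le_norm _ _
    have h2 : u x * w x ≤ |u x| * |w x| := by
      rw [← abs_mul]; exact le_abs_self _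
    have hVx := hV x
    have key1 : ‖gradient u x‖ * ‖gradient w x‖
        ≤ θ/2 * ‖gradient u x‖^2 + 1/(2*θ) * ‖gradient w x‖^2 := by
      have heq : θ/2 * ‖gradient u x‖^2 + 1/(2*θ) * ‖gradient w x‖^2
          - ‖gradient u x‖ * ‖gradient w x‖
          = (θ * ‖gradient u x‖ - ‖gradient w x‖)^2/(2*θ) := by
        field_simp
        ring
      nlinarith [div_nonneg (sq_nonneg (θ * ‖gradient u x‖ - ‖gradient w x‖)) (by positivity : (0:ℝ) ≤ 2*θ), heq]
    have key2 : |u x| * |w x| ≤ θ/2 * u x^2 + 1/(2*θ) * w x^2 := by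
      have e1 : u x ^2 = |u x|^2 := (sq_abs _).symm
      have e2 : w x ^2 = |w x|^2 := (sq_abs _).symm
      rw [e1, e2]
      have heq : θ/2 * |u x|^2 + 1/(2*θ) * |w x|^2 - |u x| * |w x|
          = (θ * |u x| - |w x|)^2/(2*θ) := by
        field_simp
        ring_nf
      nlinarith [div_nonneg (sq_nonneg (θ * |u x| - |w x|)) (by positivity : (0:ℝ) ≤ 2*θ), heq]
    have e3 : ε ^ 2 * ⟪gradient u x, gradient w x⟫ ≤ ε^2 * (‖gradient u x‖ * ‖gradient w x‖) := by
      nlinarith [sq_nonneg ε]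
    have e4 : V x * u x * w x ≤ V x * (|u x| * |w x|) := by
      rw [mul_assoc]
      nlinarith
    nlinarith [mul_le_mul_of_nonneg_left key1 (sq_nonneg ε), mul_le_mul_of_nonneg_left key2 hVx]
  calc (∫ x : RN N, (ε ^ 2 * ⟪gradient u x, gradient w x⟫ + V x * u x * w x))
      ≤ ∫ x : RN N, (θ/2 * (ε ^ 2 * ‖gradient u x‖ ^ 2 + V x * u x ^ 2)
        + 1/(2*θ) * (ε ^ 2 * ‖gradient w x‖ ^ 2 + V x * w x ^ 2)) :=
        integral_mono (Bform_integrable ε hVc hV hu hw) hInt1 hmono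
  _ = θ/2 * normEsq N ε V u + 1/(2*θ) * normEsq N ε V w := by
      unfold normEsq
      have hI1 : Integrable (fun x : RN N => θ/2 * (ε ^ 2 * ‖gradient u x‖ ^ 2 + V x * u x ^ 2))
          volume :=
        Integrable.const_mul (((integrable_gradsq hu.1.2.2).const_mul _).add hu.2) _
      have hI2 : Integrable (fun x : RN N => 1/(2*θ) * (ε ^ 2 * ‖gradient w x‖ ^ 2 + V x * w x ^ 2))
          volume :=
        Integrable.const_mul (((integrable_gradsq hw.1.2.2).const_mul _).add hw.2) _
      rw [integral_add hI1 hI2, integral_const_mul, integral_const_mul]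

-- quadratic bound
lemma quad_bound {κ S c : ℝ} (hκ : 0 < κ) (hS : 0 ≤ S) (hc : 0 < c)
    (h : κ * S ≤ 2*c + Real.sqrt (κ*c) * Real.sqrt S) : S ≤ 4*c/κ := by
  set s := Real.sqrt S with hs
  set γ := Real.sqrt (κ*c) with hγ
  have hs0 : 0 ≤ s := Real.sqrt_nonneg _
  have hγ0 : 0 ≤ γ := Real.sqrt_nonneg _
  have hS2 : s^2 = S := Real.sq_sqrt hS
  have hγ2 : γ^2 = κ*c := Real.sq_sqrt (by positivity)
  rw [le_div_iff₀ hκ]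
  nlinarith [sq_nonneg (κ*s - 2*γ), h, hS2, hγ2, mul_nonneg hγ0 hs0]


lemma measurable_gradient {N : ℕ} (f : RN N → ℝ) : Measurable (gradient f) := by
  have h1 : Measurable (fderiv ℝ f) := measurable_fderiv ℝ f
  have h2 : Continuous fun ℓ : (RN N) →L[ℝ] ℝ =>
      (InnerProductSpace.toDual ℝ (RN N)).symm ℓ :=
    (InnerProductSpace.toDual ℝ (RN N)).symm.continuous
  exact h2.measurable.comp h1

-- probability-measure Cauchy–Schwarz
lemma sq_integral_le {α : Type*} [MeasurableSpace α] (μ : Measure α) [IsProbabilityMeasure μ]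
    {g : α → ℝ} (hg : Integrable g μ) (hg2 : Integrable (fun a => g a ^ 2) μ) :
    (∫ a, g a ∂μ) ^ 2 ≤ ∫ a, g a ^ 2 ∂μ := by
  set m := ∫ a, g a ∂μ with hm
  have h0 : 0 ≤ ∫ a, (g a - m)^2 ∂μ := integral_nonneg fun a => sq_nonneg _
  have hexp : ∫ a, (g a - m)^2 ∂μ = (∫ a, g a ^2 ∂μ) - 2*m*m + m^2 := by
    have : (fun a => (g a - m)^2) = fun a => g a^2 - 2*m*(g a) + m^2 := by
      funext a; ring
    rw [this]
    have hI1 : Integrable (fun a => g a ^ 2 - 2*m*(g a)) μ := by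
      exact hg2.sub (hg.const_mul (2*m))
    rw [integral_add hI1 (integrable_const _),
      integral_sub hg2 (hg.const_mul (2*m)), integral_const_mul, integral_const]
    simp [← hm]
  nlinarith [h0, hexp]

lemma chain_deriv {N : ℕ} {f : RN N → ℝ} (hf : Differentiable ℝ f) (x h : RN N) (t : ℝ) :
    HasDerivAt (fun s : ℝ => f (x + s • h)) ⟪gradient f (x + t • h), h⟫ t := by
  have hγ : HasDerivAt (fun s : ℝ => x + s • h) h t := by
    simpa using ((hasDerivAt_id t).smul_const h).const_add x
  have hcomp := (hf (x + t • h)).hasFDerivAt.comp_hasDerivAt t hγ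
  have heq : (fderiv ℝ f (x + t • h)) h = ⟪gradient f (x + t • h), h⟫ := by
    rw [gradient]
    exact (InnerProductSpace.toDual_symm_apply).symm
  rwa [heq] at hcomp

lemma translation_lintegral_eq {N : ℕ} (g : RN N → ℝ≥0∞) (a : RN N) :
    ∫⁻ x : RN N, g (x + a) = ∫⁻ x : RN N, g x :=
  (measurePreserving_add_right volume a).lintegral_comp_emb
    (MeasurableEquiv.addRight a).measurableEmbedding g

instance : IsProbabilityMeasure ((volume : Measure ℝ).restrict (Ioc (0:ℝ) 1)) := by
  constructor
  simp [Real.volume_Ioc]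

lemma translation_estimate {N : ℕ} {f : RN N → ℝ} (hf : Differentiable ℝ f) (h : RN N) :
    ∫⁻ x : RN N, ENNReal.ofReal ((f (x + h) - f x)^2)
      ≤ ENNReal.ofReal (‖h‖^2) * ∫⁻ x : RN N, ENNReal.ofReal (‖gradient f x‖^2) := by
  rcases eq_or_ne h 0 with rfl | hne
  · simp
  set Gs := ∫⁻ x : RN N, ENNReal.ofReal (‖gradient f x‖^2) with hGs
  rcases eq_or_ne Gs ⊤ with htop | hfin
  · rw [htop, ENNReal.mul_top]
    · exact le_top
    · simp only [ne_eq, ENNReal.ofReal_eq_zero, not_le]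
      have : 0 < ‖h‖ := norm_pos_iff.2 hne
      positivity
  -- measurability facts
  have mgrad : Measurable (gradient f) := measurable_gradient f
  have hcont2 : Continuous fun p : RN N × ℝ => p.1 + p.2 • h :=
    continuous_fst.add (continuous_snd.smul continuous_const)
  have mQ : Measurable fun p : RN N × ℝ => ENNReal.ofReal (‖gradient f (p.1 + p.2 • h)‖^2) :=
    ENNReal.measurable_ofReal.comp (((mgrad.comp hcont2.measurable).norm).pow_const 2)
  have mQ' : Measurable fun p : ℝ × RN N => ENNReal.ofReal (‖gradient f (p.2 + p.1 • h)‖^2) :=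
    ENNReal.measurable_ofReal.comp (((mgrad.comp
      (continuous_snd.add (continuous_fst.smul continuous_const)).measurable).norm).pow_const 2)
  -- Φ x := ∫⁻ t in Ioc 0 1, ‖∇f(x+t•h)‖²
  set Φ : RN N → ℝ≥0∞ :=
    fun x => ∫⁻ t in Ioc (0:ℝ) 1, ENNReal.ofReal (‖gradient f (x + t • h)‖^2) with hΦ
  have hΦmeas : Measurable Φ := Measurable.lintegral_prod_right mQ
  have hΦint : ∫⁻ x : RN N, Φ x = Gs := by
    rw [hΦ]
    rw [lintegral_lintegral_swap mQ.aemeasurable]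
    have : ∀ t : ℝ, (∫⁻ x : RN N, ENNReal.ofReal (‖gradient f (x + t • h)‖^2)) = Gs := by
      intro t
      exact translation_lintegral_eq (fun z => ENNReal.ofReal (‖gradient f z‖^2)) (t • h)
    calc ∫⁻ t in Ioc (0:ℝ) 1, ∫⁻ x : RN N, ENNReal.ofReal (‖gradient f (x + t • h)‖^2)
        = ∫⁻ _ in Ioc (0:ℝ) 1, Gs := by
          apply lintegral_congr
          intro t
          exact this t
    _ = Gs := by
        rw [setLIntegral_const]
        simp [Real.volume_Ioc]
  have hΦae : ∀ᵐ x : RN N, Φ x < ⊤ := ae_lt_top hΦmeas (by rw [hΦint]; exact hfin)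
  -- pointwise a.e. bound
  have hptwise : ∀ᵐ x : RN N, ENNReal.ofReal ((f (x + h) - f x)^2)
      ≤ ∫⁻ t in Ioc (0:ℝ) 1, ENNReal.ofReal (‖h‖^2 * ‖gradient f (x + t • h)‖^2) := by
    filter_upwards [hΦae] with x hx
    set D : ℝ → ℝ := fun t => ⟪gradient f (x + t • h), h⟫ with hD
    have hDmeas : AEStronglyMeasurable D ((volume : Measure ℝ).restrict (Ioc 0 1)) := by
      have : Measurable D := by
        apply Measurable.inner
        · exact mgrad.comp (continuous_const.add (continuous_id.smul continuous_const)).measurable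
        · exact measurable_const
      exact this.aestronglyMeasurable
    have hgradint : Integrable (fun t => ‖gradient f (x + t • h)‖^2)
        ((volume : Measure ℝ).restrict (Ioc 0 1)) := by
      refine ⟨((mgrad.comp (continuous_const.add
        (continuous_id.smul continuous_const)).measurable).norm.pow_const 2).aestronglyMeasurable, ?_⟩
      rw [hasFiniteIntegral_iff_ofReal (Filter.Eventually.of_forall fun t => by positivity)]
      exact hx
    have hDint : Integrable D ((volume : Measure ℝ).restrict (Ioc 0 1)) := by
      refine Integrable.mono' ((hgradint.const_mul ‖h‖).add (integrable_const ‖h‖)) hDmeas ?_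
      refine Filter.Eventually.of_forall fun t => ?_
      have h1 : |D t| ≤ ‖gradient f (x + t • h)‖ * ‖h‖ := abs_real_inner_le_norm _ _
      have h2 : ‖gradient f (x + t • h)‖ ≤ 1 + ‖gradient f (x + t • h)‖^2 := by
        nlinarith [sq_nonneg (1 - ‖gradient f (x + t • h)‖), norm_nonneg (gradient f (x + t • h))]
      rw [Real.norm_eq_abs]
      calc |D t| ≤ ‖gradient f (x + t • h)‖ * ‖h‖ := h1
      _ ≤ (1 + ‖gradient f (x + t • h)‖^2) * ‖h‖ := by
          nlinarith [norm_nonneg h]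
      _ = ‖h‖ * ‖gradient f (x + t • h)‖^2 + ‖h‖ := by ring
    have hD2int : Integrable (fun t => D t ^ 2) ((volume : Measure ℝ).restrict (Ioc 0 1)) := by
      refine Integrable.mono' (hgradint.const_mul (‖h‖^2)) ((hDmeas.pow 2).congr ?_) ?_
      · exact Filter.Eventually.of_forall fun t => rfl
      refine Filter.Eventually.of_forall fun t => ?_
      rw [Real.norm_eq_abs, abs_of_nonneg (sq_nonneg _)]
      have := abs_real_inner_le_norm (gradient f (x + t • h)) h
      calc D t ^2 = |D t|^2 := (sq_abs _).symm
      _ ≤ (‖gradient f (x + t • h)‖ * ‖h‖)^2 := by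
          nlinarith [abs_nonneg (D t), norm_nonneg (gradient f (x + t • h)), norm_nonneg h]
      _ = ‖h‖^2 * ‖gradient f (x + t • h)‖^2 := by ring
    have hII : IntervalIntegrable D volume 0 1 := by
      rw [intervalIntegrable_iff, uIoc_of_le (zero_le_one)]
      exact hDint
    have hFTC : ∫ t in (0:ℝ)..1, D t = f (x + h) - f x := by
      have := intervalIntegral.integral_eq_sub_of_hasDerivAt
        (f := fun s : ℝ => f (x + s • h)) (f' := D)
        (fun t _ => chain_deriv hf x h t) hII
      rw [this]
      norm_num
    have hCS : (f (x + h) - f x)^2 ≤ ∫ t in Ioc (0:ℝ) 1, D t ^2 := by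
      rw [← hFTC, intervalIntegral.integral_of_le (zero_le_one)]
      exact sq_integral_le _ hDint hD2int
    calc ENNReal.ofReal ((f (x + h) - f x)^2)
        ≤ ENNReal.ofReal (∫ t in Ioc (0:ℝ) 1, D t ^2) := ENNReal.ofReal_le_ofReal hCS
    _ = ∫⁻ t in Ioc (0:ℝ) 1, ENNReal.ofReal (D t ^2) :=
        ofReal_integral_eq_lintegral_ofReal hD2int
          (Filter.Eventually.of_forall fun t => sq_nonneg _)
    _ ≤ ∫⁻ t in Ioc (0:ℝ) 1, ENNReal.ofReal (‖h‖^2 * ‖gradient f (x + t • h)‖^2) := by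
        apply lintegral_mono
        intro t
        apply ENNReal.ofReal_le_ofReal
        have := abs_real_inner_le_norm (gradient f (x + t • h)) h
        calc D t ^2 = |D t|^2 := (sq_abs _).symm
        _ ≤ (‖gradient f (x + t • h)‖ * ‖h‖)^2 := by
            nlinarith [abs_nonneg (D t), norm_nonneg (gradient f (x + t • h)), norm_nonneg h]
        _ = ‖h‖^2 * ‖gradient f (x + t • h)‖^2 := by ring
  -- integrate the pointwise bound
  calc ∫⁻ x : RN N, ENNReal.ofReal ((f (x + h) - f x)^2)
      ≤ ∫⁻ x : RN N, ∫⁻ t in Ioc (0:ℝ) 1,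
          ENNReal.ofReal (‖h‖^2 * ‖gradient f (x + t • h)‖^2) := lintegral_mono_ae hptwise
  _ = ∫⁻ t in Ioc (0:ℝ) 1, ∫⁻ x : RN N,
        ENNReal.ofReal (‖h‖^2 * ‖gradient f (x + t • h)‖^2) := by
      apply lintegral_lintegral_swap
      exact (ENNReal.measurable_ofReal.comp
        ((((mgrad.comp hcont2.measurable).norm).pow_const 2).const_mul (‖h‖^2))).aemeasurable
  _ = ∫⁻ _ in Ioc (0:ℝ) 1, ENNReal.ofReal (‖h‖^2) * Gs := by
      apply lintegral_congr
      intro t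
      have heq : ∀ x : RN N, ENNReal.ofReal (‖h‖^2 * ‖gradient f (x + t • h)‖^2)
          = ENNReal.ofReal (‖h‖^2) * ENNReal.ofReal (‖gradient f (x + t • h)‖^2) := by
        intro x
        exact ENNReal.ofReal_mul (by positivity)
      simp_rw [heq]
      rw [lintegral_const_mul' _ _ ENNReal.ofReal_ne_top]
      congr 1
      exact translation_lintegral_eq (fun z => ENNReal.ofReal (‖gradient f z‖^2)) (t • h)
  _ = ENNReal.ofReal (‖h‖^2) * Gs := by
      rw [setLIntegral_const]
      simp [Real.volume_Ioc]


open Classical in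
lemma core_poincare {N : ℕ} {f : RN N → ℝ} (hf : Differentiable ℝ f)
    {A : Set (RN N)} (hA : MeasurableSet A) {r : ℝ} (hr : 0 < r)
    {v₀ : ℝ≥0∞} (hv₀top : v₀ ≠ ⊤)
    (hv₀ : ∀ x ∈ A, v₀ ≤ volume (Metric.ball x r \ A)) :
    v₀ * ∫⁻ x in A, ENNReal.ofReal (f x ^ 2)
      ≤ 2 * volume (Metric.ball (0:RN N) r) * (∫⁻ x in Aᶜ, ENNReal.ofReal (f x ^ 2))
        + 2 * ENNReal.ofReal (r^2) * volume (Metric.ball (0:RN N) r)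
          * ∫⁻ x : RN N, ENNReal.ofReal (‖gradient f x‖^2) := by
  have hfc : Continuous f := hf.continuous
  set F : RN N → ℝ≥0∞ := fun x => ENNReal.ofReal (f x ^ 2) with hF
  have hFmeas : Measurable F := ENNReal.measurable_ofReal.comp ((hfc.pow 2).measurable)
  set Gs := ∫⁻ x : RN N, ENNReal.ofReal (‖gradient f x‖^2) with hGs
  set VBr := volume (Metric.ball (0:RN N) r) with hVBr
  -- the two kernels
  set g1 : RN N → RN N → ℝ≥0∞ :=
    fun x y => if ‖y - x‖ < r ∧ y ∉ A then F y else 0 with hg1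
  set g2 : RN N → RN N → ℝ≥0∞ :=
    fun x y => if ‖y - x‖ < r then ENNReal.ofReal ((f x - f y)^2) else 0 with hg2
  have hg1meas : Measurable (Function.uncurry g1) := by
    apply Measurable.ite
    · have h1 : MeasurableSet {p : RN N × RN N | ‖p.2 - p.1‖ < r} :=
        measurableSet_lt ((continuous_snd.sub continuous_fst).norm.measurable) measurable_const
      have h2 : MeasurableSet {p : RN N × RN N | p.2 ∉ A} :=
        (hA.compl).preimage measurable_snd
      exact h1.inter h2
    · exact hFmeas.comp measurable_snd
    · exact measurable_const
  have hg2meas : Measurable (Function.uncurry g2) := by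
    apply Measurable.ite
    · exact measurableSet_lt ((continuous_snd.sub continuous_fst).norm.measurable) measurable_const
    · exact ENNReal.measurable_ofReal.comp
        (((hfc.comp continuous_fst).sub (hfc.comp continuous_snd)).pow 2).measurable
    · exact measurable_const
  -- step A: pointwise anchor bound
  have stepA : ∀ x ∈ A, v₀ * F x ≤ 2 * (∫⁻ y, g1 x y) + 2 * (∫⁻ y, g2 x y) := by
    intro x hx
    have hS : MeasurableSet (Metric.ball x r \ A) := Metric.isOpen_ball.measurableSet.diff hA
    calc v₀ * F x ≤ volume (Metric.ball x r \ A) * F x :=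
          mul_le_mul_left (hv₀ x hx) _
    _ = ∫⁻ _ in Metric.ball x r \ A, F x := by rw [setLIntegral_const, mul_comm]
    _ ≤ ∫⁻ y in Metric.ball x r \ A, (2 * F y + 2 * ENNReal.ofReal ((f x - f y)^2)) := by
        apply setLIntegral_mono
        · exact ((hFmeas.const_mul 2).add
            ((ENNReal.measurable_ofReal.comp
              (((continuous_const.sub hfc).pow 2).measurable)).const_mul 2))
        · intro y _
          have hineq : f x ^2 ≤ 2 * f y^2 + 2*(f x - f y)^2 := by
            nlinarith [sq_nonneg (f x - 2*f y)]
          calc F x = ENNReal.ofReal (f x ^2) := rfl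
          _ ≤ ENNReal.ofReal (2 * f y^2 + 2*(f x - f y)^2) := ENNReal.ofReal_le_ofReal hineq
          _ = 2 * F y + 2 * ENNReal.ofReal ((f x - f y)^2) := by
              rw [ENNReal.ofReal_add (by positivity) (by positivity),
                ENNReal.ofReal_mul (by norm_num), ENNReal.ofReal_mul (by norm_num)]
              norm_num
              rfl
    _ = (∫⁻ y in Metric.ball x r \ A, 2 * F y)
          + ∫⁻ y in Metric.ball x r \ A, 2 * ENNReal.ofReal ((f x - f y)^2) := by
        apply lintegral_add_left
        exact (hFmeas.const_mul 2)
    _ ≤ 2 * (∫⁻ y, g1 x y) + 2 * (∫⁻ y, g2 x y) := by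
        apply add_le_add
        · rw [lintegral_const_mul' _ _ (by norm_num : (2:ℝ≥0∞) ≠ ⊤)]
          apply mul_le_mul_right
          rw [← lintegral_indicator hS]
          apply lintegral_mono
          intro y
          by_cases hy : y ∈ Metric.ball x r \ A
          · rw [Set.indicator_of_mem hy]
            have h1 : ‖y - x‖ < r := by
              have := hy.1
              rwa [Metric.mem_ball, dist_eq_norm] at this
            have h2 : y ∉ A := hy.2
            simp only [hg1]
            rw [if_pos (show ‖y - x‖ < r ∧ y ∉ A from ⟨h1, h2⟩)]
          · rw [Set.indicator_of_notMem hy]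
            exact zero_le
        · rw [lintegral_const_mul' _ _ (by norm_num : (2:ℝ≥0∞) ≠ ⊤)]
          apply mul_le_mul_right
          rw [← lintegral_indicator hS]
          apply lintegral_mono
          intro y
          by_cases hy : y ∈ Metric.ball x r \ A
          · rw [Set.indicator_of_mem hy]
            have h1 : ‖y - x‖ < r := by
              have := hy.1
              rwa [Metric.mem_ball, dist_eq_norm] at this
            simp only [hg2]
            rw [if_pos h1]
          · rw [Set.indicator_of_notMem hy]
            exact zero_le
  -- integrate over x ∈ A
  have stepB : v₀ * ∫⁻ x in A, F x
      ≤ (∫⁻ x, ∫⁻ y, g1 x y) * 2 + (∫⁻ x, ∫⁻ y, g2 x y) * 2 := by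
    rw [← lintegral_const_mul' _ _ hv₀top]
    calc ∫⁻ x in A, v₀ * F x ≤ ∫⁻ x in A, (2 * (∫⁻ y, g1 x y) + 2 * (∫⁻ y, g2 x y)) := by
          apply setLIntegral_mono
          · exact ((hg1meas.lintegral_prod_right.const_mul 2).add
              (hg2meas.lintegral_prod_right.const_mul 2))
          · exact stepA
    _ ≤ ∫⁻ x, (2 * (∫⁻ y, g1 x y) + 2 * (∫⁻ y, g2 x y)) :=
          lintegral_mono' Measure.restrict_le_self (le_refl _)
    _ = 2 * (∫⁻ x, ∫⁻ y, g1 x y) + 2 * (∫⁻ x, ∫⁻ y, g2 x y) := by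
          rw [lintegral_add_left (hg1meas.lintegral_prod_right.const_mul 2),
            lintegral_const_mul' _ _ (by norm_num : (2:ℝ≥0∞) ≠ ⊤),
            lintegral_const_mul' _ _ (by norm_num : (2:ℝ≥0∞) ≠ ⊤)]
    _ = (∫⁻ x, ∫⁻ y, g1 x y) * 2 + (∫⁻ x, ∫⁻ y, g2 x y) * 2 := by ring
  -- T1
  have hT1 : (∫⁻ x, ∫⁻ y, g1 x y) ≤ VBr * ∫⁻ y in Aᶜ, F y := by
    refine le_of_eq ?_
    rw [lintegral_lintegral_swap hg1meas.aemeasurable]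
    have hinner : ∀ y : RN N, (∫⁻ x, g1 x y) = (Aᶜ.indicator F y) * VBr := by
      intro y
      by_cases hy : y ∈ A
      · have hz : ∀ x : RN N, g1 x y = 0 := by
          intro x
          simp only [hg1]
          rw [if_neg]
          rintro ⟨-, h2⟩
          exact h2 hy
        simp only [hz]
        rw [lintegral_zero, Set.indicator_of_notMem (show y ∉ Aᶜ by simp [hy]), zero_mul]
      · have : ∀ x : RN N, g1 x y = (Metric.ball y r).indicator (fun _ => F y) x := by
          intro x
          simp only [hg1]
          by_cases hxy : ‖y - x‖ < r
          · rw [if_pos ⟨hxy, hy⟩, Set.indicator_of_mem]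
            rw [Metric.mem_ball, dist_eq_norm, norm_sub_rev]
            exact hxy
          · rw [if_neg (by tauto), Set.indicator_of_notMem]
            rw [Metric.mem_ball, dist_eq_norm, norm_sub_rev]
            exact hxy
        simp only [this]
        rw [lintegral_indicator Metric.isOpen_ball.measurableSet, setLIntegral_const,
          Measure.addHaar_ball_center, Set.indicator_of_mem (by simpa using hy)]
    calc ∫⁻ y, ∫⁻ x, g1 x y = ∫⁻ y, (Aᶜ.indicator F y) * VBr := lintegral_congr hinner
    _ = (∫⁻ y, Aᶜ.indicator F y) * VBr := by
        rw [lintegral_mul_const' _ _ (measure_ball_lt_top).ne]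
    _ = (∫⁻ y in Aᶜ, F y) * VBr := by rw [lintegral_indicator hA.compl]
    _ = VBr * ∫⁻ y in Aᶜ, F y := mul_comm _ _
  -- T2
  have hT2 : (∫⁻ x, ∫⁻ y, g2 x y) ≤ ENNReal.ofReal (r^2) * VBr * Gs := by
    have hsub : ∀ x : RN N, (∫⁻ y, g2 x y)
        = ∫⁻ h : RN N, if ‖h‖ < r then ENNReal.ofReal ((f (x + h) - f x)^2) else 0 := by
      intro x
      rw [← translation_lintegral_eq (fun y => g2 x y) x]
      apply lintegral_congr
      intro h
      show g2 x (h + x) = _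
      simp only [hg2, add_sub_cancel_right]
      by_cases hh : ‖h‖ < r
      · rw [if_pos hh, if_pos hh, add_comm h x]
        congr 1
        ring
      · rw [if_neg hh, if_neg hh]
    calc (∫⁻ x, ∫⁻ y, g2 x y)
        = ∫⁻ x, ∫⁻ h : RN N, (if ‖h‖ < r then ENNReal.ofReal ((f (x + h) - f x)^2) else 0) :=
          lintegral_congr hsub
    _ = ∫⁻ h : RN N, ∫⁻ x, (if ‖h‖ < r then ENNReal.ofReal ((f (x + h) - f x)^2) else 0) := by
        apply lintegral_lintegral_swap
        apply Measurable.aemeasurable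
        apply Measurable.ite
        · exact measurableSet_lt (continuous_snd.norm.measurable) measurable_const
        · exact ENNReal.measurable_ofReal.comp
            (((hfc.comp (continuous_fst.add continuous_snd)).sub
              (hfc.comp continuous_fst)).pow 2).measurable
        · exact measurable_const
    _ ≤ ∫⁻ h : RN N, (if ‖h‖ < r then ENNReal.ofReal (r^2) * Gs else 0) := by
        apply lintegral_mono
        intro h
        by_cases hh : ‖h‖ < r
        · simp only [if_pos hh]
          calc ∫⁻ x, ENNReal.ofReal ((f (x + h) - f x)^2)
              ≤ ENNReal.ofReal (‖h‖^2) * Gs := translation_estimate hf h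
          _ ≤ ENNReal.ofReal (r^2) * Gs := by
              apply mul_le_mul_left
              apply ENNReal.ofReal_le_ofReal
              nlinarith [norm_nonneg h]
        · simp only [if_neg hh, lintegral_zero, le_refl]
    _ = ENNReal.ofReal (r^2) * Gs * VBr := by
        have : ∀ h : RN N, (if ‖h‖ < r then ENNReal.ofReal (r^2) * Gs else 0)
            = (Metric.ball (0:RN N) r).indicator (fun _ => ENNReal.ofReal (r^2) * Gs) h := by
          intro h
          rw [Set.indicator]
          congr 1
          simp [Metric.mem_ball, dist_eq_norm]
        rw [lintegral_congr this, lintegral_indicator Metric.isOpen_ball.measurableSet,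
          setLIntegral_const]
    _ = ENNReal.ofReal (r^2) * VBr * Gs := by ring
  calc v₀ * ∫⁻ x in A, F x
      ≤ (∫⁻ x, ∫⁻ y, g1 x y) * 2 + (∫⁻ x, ∫⁻ y, g2 x y) * 2 := stepB
  _ ≤ (VBr * ∫⁻ y in Aᶜ, F y) * 2 + (ENNReal.ofReal (r^2) * VBr * Gs) * 2 := by
      exact add_le_add (mul_le_mul_left hT1 2) (mul_le_mul_left hT2 2)
  _ = 2 * VBr * (∫⁻ x in Aᶜ, F x) + 2 * ENNReal.ofReal (r^2) * VBr * Gs := by ring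


lemma exists_anchor {N : ℕ} (hN : 3 ≤ N) {A : Set (RN N)} (hAfin : volume A < ⊤) :
    ∃ r : ℝ, 0 < r ∧ ∀ x ∈ A, (1:ℝ≥0∞) ≤ volume (Metric.ball x r \ A) := by
  haveI : Nontrivial (RN N) := by
    refine ⟨EuclideanSpace.single (⟨0, by omega⟩ : Fin N) (1:ℝ), 0, ?_⟩
    intro hcon
    have := congrArg (fun v : RN N => v (⟨0, by omega⟩ : Fin N)) hcon
    simp [EuclideanSpace.single_apply] at this
  have huniv : (volume : Measure (RN N)) univ = ⊤ := measure_univ_of_isAddLeftInvariant volume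
  have hsup : (⨆ n : ℕ, volume (Metric.ball (0:RN N) n)) = ⊤ := by
    have hdir : Directed (· ⊆ ·) fun n : ℕ => Metric.ball (0:RN N) n := by
      intro m n
      exact ⟨max m n, Metric.ball_subset_ball (by exact_mod_cast le_max_left m n),
        Metric.ball_subset_ball (by exact_mod_cast le_max_right m n)⟩
    rw [← Directed.measure_iUnion hdir, Metric.iUnion_ball_nat, huniv]
  have hlt : volume A + 1 < ⨆ n : ℕ, volume (Metric.ball (0:RN N) n) := by
    rw [hsup]
    exact ENNReal.add_lt_top.2 ⟨hAfin, ENNReal.one_lt_top⟩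
  obtain ⟨n, hn⟩ := lt_iSup_iff.1 hlt
  refine ⟨n, ?_, ?_⟩
  · by_contra hcon
    push_neg at hcon
    rw [Metric.ball_eq_empty.2 hcon] at hn
    simp at hn
  · intro x hx
    have hball : volume (Metric.ball x (n:ℝ)) = volume (Metric.ball (0:RN N) n) :=
      Measure.addHaar_ball_center volume x _
    have hsub : volume (Metric.ball x (n:ℝ)) ≤ volume (Metric.ball x (n:ℝ) \ A) + volume A := by
      calc volume (Metric.ball x (n:ℝ)) ≤ volume ((Metric.ball x (n:ℝ) \ A) ∪ A) :=
            measure_mono fun y hy => by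
              by_cases hyA : y ∈ A
              · exact Or.inr hyA
              · exact Or.inl ⟨hy, hyA⟩
      _ ≤ volume (Metric.ball x (n:ℝ) \ A) + volume A := measure_union_le _ _
    have h1 : volume A + 1 ≤ volume (Metric.ball x (n:ℝ)) := by
      rw [hball]; exact hn.le
    -- conclude 1 ≤ vol(ball \ A)
    by_contra hcon
    push_neg at hcon
    have : volume (Metric.ball x (n:ℝ)) < volume A + 1 :=
      lt_of_le_of_lt hsub (by
        calc volume (Metric.ball x (n:ℝ) \ A) + volume A < 1 + volume A :=
              ENNReal.add_lt_add_right hAfin.ne hcon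
        _ = volume A + 1 := add_comm _ _)
    exact absurd (lt_of_le_of_lt h1 this) (lt_irrefl _)

lemma lintegral_sq_lt_top {N : ℕ} {f : RN N → ℝ} (hf : Integrable (fun x => f x ^2) (volume : Measure (RN N))) :
    (∫⁻ x : RN N, ENNReal.ofReal (f x ^2)) < ⊤ := by
  rw [← hasFiniteIntegral_iff_ofReal (Filter.Eventually.of_forall fun x => sq_nonneg _)]
  exact hf.hasFiniteIntegral

lemma lintegral_normsq_lt_top {N : ℕ} {g : RN N → RN N}
    (hf : Integrable (fun x => ‖g x‖ ^2) (volume : Measure (RN N))) :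
    (∫⁻ x : RN N, ENNReal.ofReal (‖g x‖ ^2)) < ⊤ := by
  rw [← hasFiniteIntegral_iff_ofReal (Filter.Eventually.of_forall fun x => sq_nonneg _)]
  exact hf.hasFiniteIntegral

lemma L2_bound {N : ℕ} (hN : 3 ≤ N) {f : RN N → ℝ} (hd : Differentiable ℝ f)
    (hf2 : Integrable (fun x => f x ^ 2) (volume : Measure (RN N)))
    (hgrad2 : Integrable (fun x => ‖gradient f x‖ ^ 2) (volume : Measure (RN N)))
    {A : Set (RN N)} (hA : MeasurableSet A) {r : ℝ} (hr : 0 < r)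
    (hanchor : ∀ x ∈ A, (1:ℝ≥0∞) ≤ volume (Metric.ball x r \ A)) :
    (∫ x : RN N, f x ^ 2)
      ≤ (1 + 2 * (volume (Metric.ball (0:RN N) r)).toReal) * (∫ x in Aᶜ, f x ^ 2)
        + 2 * r^2 * (volume (Metric.ball (0:RN N) r)).toReal * ∫ x : RN N, ‖gradient f x‖ ^ 2 := by
  have hfc : Continuous f := hd.continuous
  set F : RN N → ℝ≥0∞ := fun x => ENNReal.ofReal (f x ^ 2) with hF
  set VBr := volume (Metric.ball (0:RN N) r) with hVBr
  have hVBrfin : VBr ≠ ⊤ := measure_ball_lt_top.ne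
  have hFfin : (∫⁻ x : RN N, F x) < ⊤ := lintegral_sq_lt_top hf2
  have hFA : (∫⁻ x in A, F x) < ⊤ :=
    lt_of_le_of_lt (lintegral_mono' Measure.restrict_le_self (le_refl _)) hFfin
  have hFAc : (∫⁻ x in Aᶜ, F x) < ⊤ :=
    lt_of_le_of_lt (lintegral_mono' Measure.restrict_le_self (le_refl _)) hFfin
  have hGfin : (∫⁻ x : RN N, ENNReal.ofReal (‖gradient f x‖^2)) < ⊤ :=
    lintegral_normsq_lt_top hgrad2
  set Gs := ∫⁻ x : RN N, ENNReal.ofReal (‖gradient f x‖^2) with hGs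
  -- real representations
  have hrep : ∀ (S : Set (RN N)), MeasurableSet S → (∫ x in S, f x ^2) = (∫⁻ x in S, F x).toReal := by
    intro S hS
    rw [integral_eq_lintegral_of_nonneg_ae (Filter.Eventually.of_forall fun x => sq_nonneg _)
      ((hfc.pow 2).aestronglyMeasurable)]
  have hrepG : (∫ x : RN N, ‖gradient f x‖^2) = Gs.toReal := by
    rw [integral_eq_lintegral_of_nonneg_ae (Filter.Eventually.of_forall fun x => sq_nonneg _)
      hgrad2.aestronglyMeasurable]
  -- split
  have hsplit : (∫ x : RN N, f x ^ 2) = (∫ x in A, f x ^2) + ∫ x in Aᶜ, f x ^2 :=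
    (integral_add_compl hA hf2).symm
  -- core bound, real form
  have hcore := core_poincare hd hA hr (v₀ := 1) (by norm_num) hanchor
  rw [one_mul] at hcore
  have hRHSfin : 2 * VBr * (∫⁻ x in Aᶜ, F x) + 2 * ENNReal.ofReal (r^2) * VBr * Gs ≠ ⊤ := by
    apply ENNReal.add_ne_top.2
    constructor
    · exact ENNReal.mul_ne_top (ENNReal.mul_ne_top (by norm_num) hVBrfin) hFAc.ne
    · exact ENNReal.mul_ne_top (ENNReal.mul_ne_top
        (ENNReal.mul_ne_top (by norm_num) ENNReal.ofReal_ne_top) hVBrfin) hGfin.ne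
  have hcoreR : (∫ x in A, f x ^2)
      ≤ 2 * VBr.toReal * (∫ x in Aᶜ, f x ^2) + 2 * r^2 * VBr.toReal * Gs.toReal := by
    rw [hrep A hA, hrep Aᶜ hA.compl]
    calc (∫⁻ x in A, F x).toReal
        ≤ (2 * VBr * (∫⁻ x in Aᶜ, F x) + 2 * ENNReal.ofReal (r^2) * VBr * Gs).toReal :=
          ENNReal.toReal_mono hRHSfin hcore
    _ = 2 * VBr.toReal * (∫⁻ x in Aᶜ, F x).toReal + 2 * r^2 * VBr.toReal * Gs.toReal := by
        rw [ENNReal.toReal_add (ENNReal.mul_ne_top (ENNReal.mul_ne_top (by norm_num) hVBrfin) hFAc.ne)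
          (ENNReal.mul_ne_top (ENNReal.mul_ne_top
            (ENNReal.mul_ne_top (by norm_num) ENNReal.ofReal_ne_top) hVBrfin) hGfin.ne),
          ENNReal.toReal_mul, ENNReal.toReal_mul, ENNReal.toReal_mul, ENNReal.toReal_mul,
          ENNReal.toReal_mul, ENNReal.toReal_ofReal (by positivity)]
        norm_num
  have hPnonneg : 0 ≤ ∫ x in Aᶜ, f x ^2 := integral_nonneg fun x => sq_nonneg _
  calc (∫ x : RN N, f x ^ 2) = (∫ x in A, f x ^2) + ∫ x in Aᶜ, f x ^2 := hsplit
  _ ≤ (2 * VBr.toReal * (∫ x in Aᶜ, f x ^2) + 2 * r^2 * VBr.toReal * Gs.toReal)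
        + ∫ x in Aᶜ, f x ^2 := by linarith [hcoreR]
  _ = (1 + 2 * VBr.toReal) * (∫ x in Aᶜ, f x ^2) + 2 * r^2 * VBr.toReal * Gs.toReal := by ring
  _ = (1 + 2 * VBr.toReal) * (∫ x in Aᶜ, f x ^2)
        + 2 * r^2 * VBr.toReal * ∫ x : RN N, ‖gradient f x‖ ^ 2 := by rw [hrepG]

-- PRELUDE EXTRAS
lemma Ider_self {N : ℕ} {μ : ℝ} (hN : 3 ≤ N) (hμN : μ < (N:ℝ)) (ε : ℝ) (V : RN N → ℝ)
    (u : RN N → ℝ) :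
    Ider N μ ε V u u = normEsq N ε V u - DD N μ (pU N μ) u - DD N μ (pL N μ) u := by
  unfold Ider normEsq
  rw [convTerm_self_eq_DD (pU_pos hN hμN) u, convTerm_self_eq_DD (pL_pos hN hμN) u]
  have hcongr : (fun x : RN N => ε^2 * ⟪gradient u x, gradient u x⟫ + V x * u x * u x)
      = fun x : RN N => ε^2 * ‖gradient u x‖^2 + V x * u x^2 := by
    funext x
    rw [real_inner_self_eq_norm_sq]
    ring
  rw [hcongr]

lemma gradient_sub' {N : ℕ} {u w : RN N → ℝ} (hu : Differentiable ℝ u) (hw : Differentiable ℝ w)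
    (x : RN N) :
    gradient (fun y => u y - w y) x = gradient u x - gradient w x := by
  unfold gradient
  rw [fderiv_fun_sub (hu x) (hw x), map_sub]


-- clean-context arithmetic lemmas
lemma theta_gt_two {Nr μ τ : ℝ} (hN3 : 3 ≤ Nr) (hμ0 : 0 < μ) (hμN : μ < Nr)
    (hτ0 : 0 < τ) (hτle : τ ≤ 1 / (Nr - μ + 2)) :
    2 < 2 * (1 - 2 * τ) * (2 * Nr - μ) / (Nr - μ) := by
  have hdpos : (0:ℝ) < Nr - μ := by linarith
  rw [lt_div_iff₀ hdpos]
  have hs : (0:ℝ) < Nr - μ + 2 := by linarith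
  have h1 : τ * (Nr - μ + 2) ≤ 1 := (le_div_iff₀ hs).1 hτle
  have h2 : (Nr - μ)/(Nr - μ + 2) ≤ 1 - 2*τ := by
    rw [div_le_iff₀ hs]
    nlinarith
  have h3 : (Nr - μ)/(Nr - μ + 2) * (2*(2*Nr - μ)) ≤ (1 - 2*τ) * (2*(2*Nr - μ)) :=
    mul_le_mul_of_nonneg_right h2 (by linarith)
  have h4 : 2*(Nr - μ) < (Nr - μ)/(Nr - μ + 2) * (2*(2*Nr - μ)) := by
    rw [div_mul_eq_mul_div, lt_div_iff₀ hs]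
    nlinarith
  nlinarith

lemma key_arith {S AU BL D aD c g s q z κ : ℝ}
    (h1 : (1/2)*S - z*AU - q*BL ≤ 2*c)
    (hzq : z*AU ≤ q*AU)
    (hsum : AU + BL = S - D)
    (hq0 : 0 ≤ q) (hq1 : q ≤ 1)
    (haD0 : 0 ≤ aD)
    (habs : -D ≤ aD)
    (haD2 : aD ≤ g*s)
    (hκeq : κ = 1/2 - q) :
    κ*S ≤ 2*c + g*s := by
  have h' : q*AU + q*BL = q*S - q*D := by linear_combination q * hsum
  have hκS : κ*S = (1/2)*S - q*S := by rw [hκeq]; ring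
  have hmul1 : q*(-D) ≤ q*aD := mul_le_mul_of_nonneg_left habs hq0
  have hmul2 : q*aD ≤ aD := by nlinarith
  nlinarith [h1, hzq, h', hκS, hmul1, hmul2, haD2]

lemma nw_arith {Nw B : ℝ} (hNw0 : 0 ≤ Nw) (hB0 : 0 ≤ B)
    (h : Nw ≤ Real.sqrt B * Real.sqrt Nw) : Nw ≤ B := by
  have h1 : Real.sqrt Nw ^ 2 = Nw := Real.sq_sqrt hNw0
  have h2 : Real.sqrt B ^ 2 = B := Real.sq_sqrt hB0
  nlinarith [Real.sqrt_nonneg Nw, Real.sqrt_nonneg B, sq_nonneg (Real.sqrt Nw - Real.sqrt B)]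

lemma normsq_sub_le {N : ℕ} (a b : RN N) : ‖a - b‖^2 ≤ 2*‖a‖^2 + 2*‖b‖^2 := by
  have h1 := norm_sub_le a b
  nlinarith [norm_nonneg a, norm_nonneg b, norm_nonneg (a - b), sq_nonneg (‖a‖ - ‖b‖)]

lemma Vsq_sub_le {V a b : ℝ} (hV : 0 ≤ V) : V * (a - b)^2 ≤ 2*(V*a^2) + 2*(V*b^2) := by
  nlinarith [sq_nonneg (a + b), mul_nonneg hV (sq_nonneg (a + b))]

lemma sq_mul_le_of_le {b V f : ℝ} (hb : 0 < b) (h : b ≤ V) : f^2 * b ≤ V * f^2 := by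
  nlinarith [sq_nonneg f]

set_option maxHeartbeats 1000000 in
/-- Smallness of the `L²` mass of `w_n = u_n − u` for a `(PS)_{c_ε}` sequence at a
mountain-pass level `c_ε ≤ δ((N−μ)/(2N−μ))2^{N/(N−μ)}ε^{2(1−2τ)(2N−μ)/(N−μ)}`. -/
theorem statement_10 (N : ℕ) (hN : 3 ≤ N) (μ τ : ℝ) (hμ0 : 0 < μ) (hμN : μ < (N:ℝ))
    (V : RN N → ℝ) (hV1 : CondV1 N V) (hV2 : CondV2 N V) (hV3 : CondV3 N μ V τ)
    (δ : ℝ) (hδ : 0 < δ) :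
    ∀ η : ℝ, 0 < η → ∃ ℰ : ℝ, 0 < ℰ ∧ ∀ ε : ℝ, 0 < ε → ε ≤ ℰ →
      ∀ c : ℝ, 0 < c →
        c ≤ δ * (((N:ℝ) - μ) / (2 * (N:ℝ) - μ)) * 2 ^ ((N:ℝ) / ((N:ℝ) - μ)) *
            ε ^ (2 * (1 - 2 * τ) * (2 * (N:ℝ) - μ) / ((N:ℝ) - μ)) →
        ∀ u : ℕ → RN N → ℝ, PSseqE N μ ε V c u →
        ∀ w : RN N → ℝ, MemE N V w → WeakConvE N ε V u w → IsSolE N μ ε V w →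
          0 ≤ Ifun N μ ε V w →
          ∀ᶠ n in atTop, (∫ x : RN N, (u n x - w x) ^ 2) ≤ η := by
  obtain ⟨hVc, b, hb, hAfin⟩ := hV1
  obtain ⟨hV0, hVpos⟩ := hV2
  obtain ⟨hτ0, hτle, -⟩ := hV3
  intro η hη
  have hN3 : (3:ℝ) ≤ (N:ℝ) := by exact_mod_cast hN
  set A : Set (RN N) := {x : RN N | V x < b} with hAdef
  have hAmeas : MeasurableSet A := (IsOpen.preimage hVc isOpen_Iio).measurableSet
  obtain ⟨r, hr, hanchor⟩ := exists_anchor hN hAfin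
  set VBrR := (volume (Metric.ball (0:RN N) r)).toReal with hVBrR
  have hVBrR0 : 0 ≤ VBrR := ENNReal.toReal_nonneg
  set pLv := pL N μ with hpLvdef
  set pUv := pU N μ with hpUvdef
  have hpL1 : 1 < pLv := pL_gt_one hN hμ0 hμN
  have hpL0 : 0 < pLv := pL_pos hN hμN
  have hpU0 : 0 < pUv := pU_pos hN hμN
  have hpLU : pLv ≤ pUv := pL_le_pU hN hμN
  set q : ℝ := 1/(2*pLv) with hqdef
  have hq0 : 0 < q := by rw [hqdef]; positivity
  have hqhalf : q < 1/2 := by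
    rw [hqdef, div_lt_div_iff₀ (by positivity) (by norm_num)]
    linarith
  have hq1 : q ≤ 1 := by
    rw [hqdef, div_le_one (by positivity)]
    linarith
  set κ : ℝ := 1/2 - q with hκdef
  have hκ : 0 < κ := by rw [hκdef]; linarith
  set C1 : ℝ := (1 + 2*VBrR) * (16/(b*κ)) with hC1def
  set C2 : ℝ := 32*r^2*VBrR/κ with hC2def
  have hC10 : 0 < C1 := by rw [hC1def]; positivity
  have hC20 : 0 ≤ C2 := by rw [hC2def]; positivity
  set K : ℝ := δ * (((N:ℝ) - μ) / (2 * (N:ℝ) - μ)) * 2 ^ ((N:ℝ) / ((N:ℝ) - μ)) with hKdef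
  have hdpos : (0:ℝ) < (N:ℝ) - μ := by linarith
  have h2Nμ : (0:ℝ) < 2*(N:ℝ) - μ := by linarith
  have hK0 : 0 < K := by
    rw [hKdef]
    have h1 : (0:ℝ) < ((N:ℝ) - μ) / (2 * (N:ℝ) - μ) := div_pos hdpos h2Nμ
    have h2 : (0:ℝ) < (2:ℝ) ^ ((N:ℝ) / ((N:ℝ) - μ)) := Real.rpow_pos_of_pos two_pos _
    positivity
  set θ : ℝ := 2 * (1 - 2 * τ) * (2 * (N:ℝ) - μ) / ((N:ℝ) - μ) with hθdef
  have hθ2 : 2 < θ := by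
    rw [hθdef]
    exact theta_gt_two hN3 hμ0 hμN hτ0 hτle
  have hθ0 : 0 < θ := by linarith
  set M : ℝ := K * (C1 + C2) + 1 with hMdef
  have hM0 : 0 < M := by
    have : 0 ≤ K * (C1 + C2) := by positivity
    rw [hMdef]; linarith
  refine ⟨min 1 ((η/M) ^ (1/(θ-2))), lt_min one_pos (Real.rpow_pos_of_pos (div_pos hη hM0) _),
    ?_⟩
  intro ε hε0 hεℰ c hc hcbound u hPS w hwE hWC hwSol hIw
  have hε1 : ε ≤ 1 := le_trans hεℰ (min_le_left _ _)
  have hεE' : ε ≤ (η/M) ^ (1/(θ-2)) := le_trans hεℰ (min_le_right _ _)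
  have hε2 : (0:ℝ) < ε^2 := by positivity
  obtain ⟨hmem, hItend, lam, hlam0, hlambd⟩ := hPS
  -- eventual bound on S_n = ‖u n‖_ε²
  have hγ0 : 0 < Real.sqrt (κ*c) := Real.sqrt_pos.2 (by positivity)
  have hev1 : ∀ᶠ n in atTop, Ifun N μ ε V (u n) ≤ 2*c :=
    hItend.eventually (eventually_le_nhds (by linarith))
  have hev2 : ∀ᶠ n in atTop, lam n ≤ Real.sqrt (κ*c) :=
    hlam0.eventually (eventually_le_nhds hγ0)
  have hevS : ∀ᶠ n in atTop, normEsq N ε V (u n) ≤ 4*c/κ := by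
    filter_upwards [hev1, hev2] with n h1 h2
    set S := normEsq N ε V (u n) with hSdef
    have hS0 : 0 ≤ S := normEsq_nonneg ε hVpos (u n)
    have hD := hlambd n (u n) (hmem n)
    have hDabs : |Ider N μ ε V (u n) (u n)| ≤ Real.sqrt (κ*c) * Real.sqrt S :=
      le_trans hD (mul_le_mul_of_nonneg_right h2 (Real.sqrt_nonneg _))
    refine quad_bound hκ hS0 hc ?_
    have hDeq := Ider_self hN hμN ε V (u n)
    set AU := DD N μ (pU N μ) (u n) with hAUdef
    set BL := DD N μ (pL N μ) (u n) with hBLdef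
    have hAU : 0 ≤ AU := DD_nonneg _
    have hBL : 0 ≤ BL := DD_nonneg _
    have hIval : Ifun N μ ε V (u n) = (1/2)*S - (1/(2*pUv))*AU - (1/(2*pLv))*BL := rfl
    rw [← hqdef] at hIval
    have hqU : 1/(2*pUv) ≤ q := by
      rw [hqdef]
      apply one_div_le_one_div_of_le (by positivity) (by linarith)
    have hzq : (1/(2*pUv))*AU ≤ q*AU := mul_le_mul_of_nonneg_right hqU hAU
    have hsum : AU + BL = S - Ider N μ ε V (u n) (u n) := by
      rw [hDeq]; ring
    have h1' : (1/2)*S - (1/(2*pUv))*AU - q*BL ≤ 2*c := by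
      rw [← hIval]; exact h1
    exact key_arith h1' hzq hsum hq0.le hq1 (abs_nonneg _) (neg_le_abs _) hDabs hκdef
  -- bound on ‖w‖_ε²
  set Nw := normEsq N ε V w with hNwdef
  have hNw0 : 0 ≤ Nw := normEsq_nonneg ε hVpos w
  have hNwle : Nw ≤ 4*c/κ := by
    have hlim := hWC w hwE
    have hlimval : (∫ x : RN N, (ε ^ 2 * ⟪gradient w x, gradient w x⟫ + V x * w x * w x)) = Nw := by
      rw [hNwdef]
      unfold normEsq
      congr 1
      funext x
      rw [real_inner_self_eq_norm_sq]
      ring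
    rw [hlimval] at hlim
    have hev : ∀ᶠ n in atTop,
        (∫ x : RN N, (ε ^ 2 * ⟪gradient (u n) x, gradient w x⟫ + V x * u n x * w x))
          ≤ Real.sqrt (4*c/κ) * Real.sqrt Nw := by
      filter_upwards [hevS] with n hn
      calc (∫ x : RN N, (ε ^ 2 * ⟪gradient (u n) x, gradient w x⟫ + V x * u n x * w x))
          ≤ Real.sqrt (normEsq N ε V (u n)) * Real.sqrt Nw := Bform_le_sqrt ε hVc hVpos (hmem n) hwE
      _ ≤ Real.sqrt (4*c/κ) * Real.sqrt Nw :=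
          mul_le_mul_of_nonneg_right (Real.sqrt_le_sqrt hn) (Real.sqrt_nonneg _)
    have hle := le_of_tendsto hlim hev
    exact nw_arith hNw0 (by positivity) hle
  -- final estimate for each good n
  filter_upwards [hevS] with n hSn
  obtain ⟨⟨hun2, hund, hung⟩, hunV⟩ := hmem n
  obtain ⟨⟨hw2, hwd, hwg⟩, hwV⟩ := hwE
  have hfd : Differentiable ℝ (fun x : RN N => u n x - w x) := hund.sub hwd
  have hgradeq : ∀ x, gradient (fun y : RN N => u n y - w y) x
      = gradient (u n) x - gradient w x := gradient_sub' hund hwd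
  have hf2 : Integrable (fun x : RN N => (u n x - w x)^2) volume := by
    exact (hun2.sub hw2).integrable_sq
  have hgrad2 : Integrable (fun x : RN N => ‖gradient (fun y : RN N => u n y - w y) x‖^2)
      volume := by
    have heq : (fun x : RN N => ‖gradient (fun y : RN N => u n y - w y) x‖^2)
        = fun x : RN N => ‖gradient (u n) x - gradient w x‖^2 := by
      funext x
      rw [hgradeq x]
    rw [heq]
    have hsub : MemLp (fun x : RN N => gradient (u n) x - gradient w x) 2 volume := by
      exact hung.sub hwg
    exact (memLp_two_iff_integrable_sq_norm hsub.aestronglyMeasurable).1 hsub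
  -- gradient part bound (multiplicative form)
  have hGb : ε^2 * (∫ x : RN N, ‖gradient (fun y : RN N => u n y - w y) x‖^2)
      ≤ 2*(normEsq N ε V (u n) + Nw) := by
    have hmono : ∀ x : RN N, ‖gradient (fun y : RN N => u n y - w y) x‖^2
        ≤ 2*‖gradient (u n) x‖^2 + 2*‖gradient w x‖^2 := by
      intro x
      rw [hgradeq x]
      exact normsq_sub_le _ _
    have hI2 : Integrable (fun x : RN N => 2*‖gradient (u n) x‖^2 + 2*‖gradient w x‖^2)
        volume := ((integrable_gradsq hung).const_mul 2).add ((integrable_gradsq hwg).const_mul 2)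
    have hint := integral_mono hgrad2 hI2 hmono
    rw [integral_add ((integrable_gradsq hung).const_mul 2) ((integrable_gradsq hwg).const_mul 2),
      integral_const_mul, integral_const_mul] at hint
    have h1 := gradpart_le_normEsq ε hVpos ⟨⟨hun2, hund, hung⟩, hunV⟩
    have h2 := gradpart_le_normEsq ε hVpos ⟨⟨hw2, hwd, hwg⟩, hwV⟩
    rw [← hNwdef] at h2
    have hint2 := mul_le_mul_of_nonneg_left hint (le_of_lt hε2)
    linarith [hint2, h1, h2]
  -- potential part bound
  have hVf2 : Integrable (fun x : RN N => V x * (u n x - w x)^2) volume := by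
    refine Integrable.mono' ((hunV.const_mul 2).add (hwV.const_mul 2))
      ((hVc.mul ((hund.continuous.sub hwd.continuous).pow 2)).aestronglyMeasurable) ?_
    refine Filter.Eventually.of_forall fun x => ?_
    rw [Real.norm_eq_abs, abs_of_nonneg (mul_nonneg (hVpos x) (sq_nonneg _))]
    exact Vsq_sub_le (hVpos x)
  have hPb : (∫ x in Aᶜ, (u n x - w x)^2) ≤ (2/b) * (normEsq N ε V (u n) + Nw) := by
    have hstep1 : (∫ x in Aᶜ, (u n x - w x)^2) ≤ ∫ x in Aᶜ, (V x * (u n x - w x)^2)/b := by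
      refine setIntegral_mono_on hf2.integrableOn (hVf2.div_const b).integrableOn
        hAmeas.compl ?_
      intro x hx
      have hbV : b ≤ V x := not_lt.1 hx
      rw [le_div_iff₀ hb]
      exact sq_mul_le_of_le hb hbV
    have hstep2 : (∫ x in Aᶜ, (V x * (u n x - w x)^2)/b)
        ≤ ∫ x : RN N, (V x * (u n x - w x)^2)/b :=
      setIntegral_le_integral (hVf2.div_const b)
        (Filter.Eventually.of_forall fun x => by
          have := hVpos x
          positivity)
    have hstep3 : (∫ x : RN N, (V x * (u n x - w x)^2)/b)
        = (∫ x : RN N, V x * (u n x - w x)^2)/b := integral_div _ _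
    have hstep4 : (∫ x : RN N, V x * (u n x - w x)^2) ≤ 2*(normEsq N ε V (u n) + Nw) := by
      have hm : ∀ x : RN N, V x * (u n x - w x)^2 ≤ 2*(V x * u n x^2) + 2*(V x * w x^2) := by
        intro x
        exact Vsq_sub_le (hVpos x)
      have hIadd : Integrable (fun x : RN N => 2*(V x * u n x^2) + 2*(V x * w x^2)) volume :=
        (hunV.const_mul 2).add (hwV.const_mul 2)
      have hint := integral_mono hVf2 hIadd hm
      rw [integral_add (hunV.const_mul 2) (hwV.const_mul 2), integral_const_mul,
        integral_const_mul] at hint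
      have h1 := Vpart_le_normEsq ε ⟨⟨hun2, hund, hung⟩, hunV⟩
      have h2 := Vpart_le_normEsq ε ⟨⟨hw2, hwd, hwg⟩, hwV⟩
      rw [← hNwdef] at h2
      linarith
    have hstep5 : (∫ x : RN N, V x * (u n x - w x)^2)/b ≤ (2*(normEsq N ε V (u n) + Nw))/b := by
      gcongr
    have heqr : (2/b) * (normEsq N ε V (u n) + Nw) = (2*(normEsq N ε V (u n) + Nw))/b := by
      ring
    linarith [hstep1, hstep2, hstep3.le, hstep3.ge, hstep5]
  -- combine everything via the core Poincaré-type inequality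
  have hmain := L2_bound hN hfd hf2 hgrad2 hAmeas hr hanchor
  have hSNw : normEsq N ε V (u n) + Nw ≤ 8*c/κ := by
    have h8 : (4:ℝ)*c/κ + 4*c/κ = 8*c/κ := by ring
    linarith [hSn, hNwle]
  have hGreal : (∫ x : RN N, ‖gradient (fun y : RN N => u n y - w y) x‖^2)
      ≤ 2*(8*c/κ)/ε^2 := by
    rw [le_div_iff₀ hε2]
    linarith [hGb, hSNw]

  have hPreal : (∫ x in Aᶜ, (u n x - w x)^2) ≤ (2/b)*(8*c/κ) := by
    have hmul : (2/b)*(normEsq N ε V (u n) + Nw) ≤ (2/b)*(8*c/κ) :=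
      mul_le_mul_of_nonneg_left hSNw (by positivity)
    linarith [hPb]
  have hchain : (∫ x : RN N, (u n x - w x)^2) ≤ C1*c + C2*(c/ε^2) := by
    calc (∫ x : RN N, (u n x - w x)^2)
        ≤ (1 + 2*VBrR) * (∫ x in Aᶜ, (u n x - w x)^2)
          + 2*r^2*VBrR * (∫ x : RN N, ‖gradient (fun y : RN N => u n y - w y) x‖^2) := hmain
    _ ≤ (1 + 2*VBrR) * ((2/b)*(8*c/κ)) + 2*r^2*VBrR * (2*(8*c/κ)/ε^2) := by
        apply add_le_add
        · exact mul_le_mul_of_nonneg_left hPreal (by positivity)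
        · exact mul_le_mul_of_nonneg_left hGreal (by positivity)
    _ = C1*c + C2*(c/ε^2) := by
        rw [hC1def, hC2def]
        field_simp
        ring
  -- ε-power bookkeeping
  have hpow : ε ^ (θ-2) * ε^2 = ε^θ := by
    have h2cast : (ε:ℝ)^2 = ε ^ ((2:ℕ):ℝ) := (Real.rpow_natCast ε 2).symm
    rw [h2cast, ← Real.rpow_add hε0]
    norm_num
  have hc2 : c/ε^2 ≤ K * ε^(θ-2) := by
    rw [div_le_iff₀ hε2]
    calc c ≤ K * ε^θ := hcbound
    _ = K * (ε^(θ-2) * ε^2) := by rw [hpow]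
    _ = K * ε^(θ-2) * ε^2 := by ring
  have hcε : c ≤ K * ε^(θ-2) := by
    calc c ≤ K * ε^θ := hcbound
    _ ≤ K * ε^(θ-2) := mul_le_mul_of_nonneg_left
        (Real.rpow_le_rpow_of_exponent_ge hε0 hε1 (by linarith)) hK0.le
  have hεθ2 : ε^(θ-2) ≤ η/M := by
    calc ε^(θ-2) ≤ ((η/M) ^ (1/(θ-2)))^(θ-2) :=
        Real.rpow_le_rpow hε0.le hεE' (by linarith)
    _ = (η/M) ^ ((1/(θ-2))*(θ-2)) := (Real.rpow_mul (by positivity) _ _).symm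
    _ = η/M := by
        rw [one_div_mul_cancel (by linarith : θ-2 ≠ 0), Real.rpow_one]
  have hεθ2nonneg : (0:ℝ) ≤ ε^(θ-2) := Real.rpow_nonneg hε0.le _
  have h1 : C1*c ≤ C1*(K*ε^(θ-2)) := mul_le_mul_of_nonneg_left hcε hC10.le
  have h2 : C2*(c/ε^2) ≤ C2*(K*ε^(θ-2)) := mul_le_mul_of_nonneg_left hc2 hC20
  calc (∫ x : RN N, (u n x - w x)^2) ≤ C1*c + C2*(c/ε^2) := hchain
  _ ≤ C1*(K*ε^(θ-2)) + C2*(K*ε^(θ-2)) := add_le_add h1 h2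
  _ = K*(C1+C2)*ε^(θ-2) := by ring
  _ ≤ M*ε^(θ-2) := mul_le_mul_of_nonneg_right (by rw [hMdef]; linarith) hεθ2nonneg
  _ ≤ M*(η/M) := mul_le_mul_of_nonneg_left hεθ2 hM0.le
  _ = η := by field_simp
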